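/- For every θ ∈ ℝ, the linear subspace E_θ ⊆ M₂(ℂ) satisfies 𝔽 = 𝔽_{μ_{E_θ}}. -/

import Mathlib

/-- The operator norm of a 2×2 complex matrix, acting on the Euclidean space ℂ². -/
noncomputable def opNorm (A : Matrix (Fin 2) (Fin 2) ℂ) : ℝ :=
  ‖LinearMap.toContinuousLinearMap (Matrix.toEuclideanLin A)‖

/-- The domain 𝔽 = {(a₁₁, a₂₂, det A, a₁₂ + a₂₁) : A ∈ M₂(ℂ), ‖A‖ < 1}. -/
noncomputable def domF : Set (ℂ × ℂ × ℂ × ℂ) :=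
  {w | ∃ A : Matrix (Fin 2) (Fin 2) ℂ, opNorm A < 1 ∧
    w = (A 0 0, A 1 1, A.det, A 0 1 + A 1 0)}

open scoped Classical in
/-- The structured singular value μ_E(A) relative to a structure set E ⊆ M₂(ℂ). -/
noncomputable def mu (E : Set (Matrix (Fin 2) (Fin 2) ℂ)) (A : Matrix (Fin 2) (Fin 2) ℂ) : ℝ :=
  if ∃ X ∈ E, (1 - A * X).det = 0 then
    (sInf {r : ℝ | ∃ X ∈ E, (1 - A * X).det = 0 ∧ r = opNorm X})⁻¹
  else 0

/-- 𝔽_{μ_E} = {(a₁₁, a₂₂, det A, a₁₂ + a₂₁) : A ∈ M₂(ℂ), μ_E(A) < 1}. -/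
noncomputable def Fmu (E : Set (Matrix (Fin 2) (Fin 2) ℂ)) : Set (ℂ × ℂ × ℂ × ℂ) :=
  {w | ∃ A : Matrix (Fin 2) (Fin 2) ℂ, mu E A < 1 ∧
    w = (A 0 0, A 1 1, A.det, A 0 1 + A 1 0)}

/-- The structure E_θ = {[[z₁, w],[e^{iθ}w, z₂]] : z₁, z₂, w ∈ ℂ}. -/
def EthetaSet (θ : ℝ) : Set (Matrix (Fin 2) (Fin 2) ℂ) :=
  {M | ∃ z1 z2 w : ℂ, M = !![z1, w; Complex.exp (θ * Complex.I) * w, z2]}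

/-!
We show `μ_{E_θ}(A) = ‖A‖` for every `A`, so both sets are images of the same set of matrices.
The inequality `μ_E(A) ≤ ‖A‖` holds for any `E`, since `det (1 - A X) = 0` forces
`1 ≤ ‖A X‖ ≤ ‖A‖ ‖X‖`. For equality, `E_θ` contains enough unitaries to map any vector to any
other of the same norm: take a unit vector `x` with `‖A x‖ = ‖A‖` and a unitary `U ∈ E_θ` with
`U (A x) = ‖A‖ x`; then `X = ‖A‖⁻¹ U ∈ E_θ` has norm `‖A‖⁻¹` and `A X` fixes `A x ≠ 0`.
-/

open Matrix ComplexConjugate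
open scoped Matrix.Norms.L2Operator

theorem ContinuousLinearMap.exists_norm_eq_one_and_norm_apply_eq {𝕜 E F : Type*} [RCLike 𝕜]
    [NormedAddCommGroup E] [NormedSpace 𝕜 E] [ProperSpace E] [Nontrivial E]
    [NormedAddCommGroup F] [NormedSpace 𝕜 F] (f : E →L[𝕜] F) :
    ∃ x, ‖x‖ = 1 ∧ ‖f x‖ = ‖f‖ := by
  let : NormedSpace ℝ E := NormedSpace.restrictScalars ℝ 𝕜 E
  obtain ⟨x, hx, hfx⟩ := ((isCompact_sphere (0 : E) 1).image (by fun_prop)).sSup_mem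
    ((NormedSpace.sphere_nonempty.mpr zero_le_one).image fun x => ‖f x‖)
  exact ⟨x, mem_sphere_zero_iff_norm.1 hx, hfx.trans f.sSup_sphere_eq_norm⟩

namespace Matrix

variable {n 𝕜 : Type*} [Fintype n] [DecidableEq n] [RCLike 𝕜]

theorem one_le_l2_opNorm_of_det_one_sub_eq_zero {M : Matrix n n 𝕜} (h : (1 - M).det = 0) :
    1 ≤ ‖M‖ := by
  by_contra! hM
  exact ((isUnit_iff_isUnit_det _).1 (isUnit_one_sub_of_norm_lt_one hM)).ne_zero h

theorem det_one_sub_eq_zero_of_toEuclideanCLM_apply_eq {M : Matrix n n 𝕜}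
    {x : EuclideanSpace 𝕜 n} (hx : x ≠ 0) (h : toEuclideanCLM (n := n) (𝕜 := 𝕜) M x = x) :
    (1 - M).det = 0 := by
  rw [← exists_mulVec_eq_zero_iff]
  refine ⟨WithLp.ofLp x, by simpa using hx, ?_⟩
  rw [sub_mulVec, one_mulVec, ← ofLp_toEuclideanCLM, h, sub_self]

theorem norm_toEuclideanCLM_apply_sq {M : Matrix n n 𝕜} {c : ℝ} (hM : Mᴴ * M = (c : 𝕜) • 1)
    (x : EuclideanSpace 𝕜 n) :
    ‖toEuclideanCLM (n := n) (𝕜 := 𝕜) M x‖ ^ 2 = c * ‖x‖ ^ 2 := by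
  have hT : ContinuousLinearMap.adjoint (toEuclideanCLM (n := n) (𝕜 := 𝕜) M) ∘L
      toEuclideanCLM (n := n) (𝕜 := 𝕜) M = (c : 𝕜) • ContinuousLinearMap.id 𝕜 _ := by
    rw [← ContinuousLinearMap.star_eq_adjoint, ← map_star, ← ContinuousLinearMap.mul_def, ← map_mul,
      star_eq_conjTranspose, hM, map_smul, map_one]
    rfl
  rw [@norm_sq_eq_re_inner 𝕜, ← ContinuousLinearMap.adjoint_inner_right,
    ← ContinuousLinearMap.comp_apply, hT, _root_.smul_apply, ContinuousLinearMap.id_apply,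
    inner_smul_right, RCLike.re_ofReal_mul, inner_self_eq_norm_sq]

end Matrix

local notation "𝒯" => toEuclideanCLM (n := Fin 2) (𝕜 := ℂ)

theorem opNorm_eq_l2_opNorm (A : Matrix (Fin 2) (Fin 2) ℂ) : opNorm A = ‖A‖ := rfl

theorem mu_eq_opNorm_of_exists_unitary {E : Set (Matrix (Fin 2) (Fin 2) ℂ)}
    (hsmul : ∀ (c : ℂ), ∀ X ∈ E, c • X ∈ E)
    (htrans : ∀ u v : EuclideanSpace ℂ (Fin 2), ‖u‖ = ‖v‖ →
      ∃ U ∈ E, U ∈ unitaryGroup (Fin 2) ℂ ∧ 𝒯 U u = v)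
    (A : Matrix (Fin 2) (Fin 2) ℂ) : mu E A = opNorm A := by
  rw [opNorm_eq_l2_opNorm]
  have hlower : ∀ X, (1 - A * X).det = 0 → ‖A‖⁻¹ ≤ opNorm X := fun X hX => by
    have h1 := (one_le_l2_opNorm_of_det_one_sub_eq_zero hX).trans (norm_mul_le A X)
    have hA : ‖A‖ ≠ 0 := fun h0 => by rw [h0, zero_mul] at h1; exact zero_lt_one.not_ge h1
    rwa [inv_le_iff_one_le_mul₀' ((norm_nonneg A).lt_of_ne' hA)]
  rcases eq_or_ne A 0 with rfl | hA
  · rw [mu, if_neg (by simp), norm_zero]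
  set σ := ‖A‖
  have hσ0 : 0 < σ := norm_pos_iff.2 hA
  obtain ⟨x, hx1, hAx⟩ := (𝒯 A).exists_norm_eq_one_and_norm_apply_eq
  rw [l2_opNorm_toEuclideanCLM] at hAx
  obtain ⟨U, hUE, hU, hUx⟩ := htrans (𝒯 A x) ((σ : ℂ) • x) (by
    rw [norm_smul, hx1, hAx, mul_one, Complex.norm_real, Real.norm_of_nonneg hσ0.le])
  set X := ((σ⁻¹ : ℝ) : ℂ) • U with hX
  have hXnorm : opNorm X = σ⁻¹ := by
    rw [opNorm_eq_l2_opNorm, norm_smul, CStarRing.norm_of_mem_unitary hU, mul_one,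
      Complex.norm_real, Real.norm_of_nonneg (inv_nonneg.2 hσ0.le)]
  have hXdet : (1 - A * X).det = 0 := by
    refine det_one_sub_eq_zero_of_toEuclideanCLM_apply_eq (x := 𝒯 A x) ?_ ?_
    · rw [← norm_ne_zero_iff, hAx]; exact hσ0.ne'
    · simp only [hX, map_mul, map_smul, mul_apply_eq_comp, _root_.smul_apply, hUx, smul_smul,
        ← Complex.ofReal_mul, inv_mul_cancel₀ hσ0.ne', Complex.ofReal_one, one_smul]
  have hleast : IsLeast {r : ℝ | ∃ X ∈ E, (1 - A * X).det = 0 ∧ r = opNorm X} σ⁻¹ :=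
    ⟨⟨X, hsmul _ _ hUE, hXdet, hXnorm.symm⟩, fun _ ⟨Y, _, hY, hr⟩ => hr ▸ hlower Y hY⟩
  rw [mu, if_pos ⟨X, hsmul _ _ hUE, hXdet⟩, hleast.csInf_eq, inv_inv]

theorem exists_ne_zero_mul_sub_conj_mul_add_mul_eq_zero (c d k : ℂ) :
    ∃ p : ℂ × ℝ, p ≠ 0 ∧ p.1 * c - conj p.1 * d + p.2 * k = 0 := by
  let f : ℂ × ℝ →ₗ[ℝ] ℂ :=
    { toFun := fun p => p.1 * c - conj p.1 * d + p.2 * k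
      map_add' := fun p q => by
        simp only [Prod.fst_add, Prod.snd_add, map_add, Complex.ofReal_add]
        ring
      map_smul' := fun r p => by
        simp only [Prod.smul_fst, Prod.smul_snd, Complex.real_smul, map_mul, Complex.conj_ofReal,
          smul_eq_mul, Complex.ofReal_mul, RingHom.id_apply]
        ring }
  have hker : LinearMap.ker f ≠ ⊥ := LinearMap.ker_ne_bot_of_finrank_lt (by
    rw [Module.finrank_prod, Complex.finrank_real_complex, Module.finrank_self]; norm_num)
  obtain ⟨p, hp, hp0⟩ := (Submodule.ne_bot_iff _).1 hker
  exact ⟨p, hp0, hp⟩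

theorem EuclideanSpace.exists_eq_smul_of_mul_sub_mul_eq_zero {𝕜 : Type*} [RCLike 𝕜]
    {p v : EuclideanSpace 𝕜 (Fin 2)} (hv : v ≠ 0) (h : p 0 * v 1 - p 1 * v 0 = 0) :
    ∃ c : 𝕜, p = c • v := by
  by_cases h0 : v 0 = 0
  · have h1 : v 1 ≠ 0 := fun h1 => hv (by ext i; fin_cases i <;> simp [h0, h1])
    have hp0 : p 0 = 0 := by simpa [h0, h1] using h
    refine ⟨p 1 / v 1, ?_⟩
    ext i; fin_cases i <;> simp [hp0, h0, h1]
  · refine ⟨p 0 / v 0, ?_⟩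
    ext i; fin_cases i
    · simp [h0]
    · simp only [Fin.mk_one, Fin.isValue, PiLp.smul_apply, smul_eq_mul]
      field_simp
      linear_combination -h

def quaternionMatrix (a w : ℂ) : Matrix (Fin 2) (Fin 2) ℂ := !![a, w; -conj w, conj a]

theorem conjTranspose_quaternionMatrix_mul_self (a w : ℂ) :
    (quaternionMatrix a w)ᴴ * quaternionMatrix a w =
      ((Complex.normSq a + Complex.normSq w : ℝ) : ℂ) • 1 := by
  ext i j
  fin_cases i <;> fin_cases j <;>
    simp [quaternionMatrix, mul_apply, Fin.sum_univ_two, Complex.normSq_eq_conj_mul_self] <;> ring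

theorem toEuclideanCLM_quaternionMatrix_apply (a w : ℂ) (x : EuclideanSpace ℂ (Fin 2)) :
    𝒯 (quaternionMatrix a w) x = !₂[a * x 0 + w * x 1, -conj w * x 0 + conj a * x 1] := by
  ext i; fin_cases i <;> simp [quaternionMatrix, mulVec, dotProduct, Fin.sum_univ_two]

theorem smul_mem_EthetaSet {θ : ℝ} (c : ℂ) {X : Matrix (Fin 2) (Fin 2) ℂ} (hX : X ∈ EthetaSet θ) :
    c • X ∈ EthetaSet θ := by
  obtain ⟨z₁, z₂, w, rfl⟩ := hX
  exact ⟨c * z₁, c * z₂, c * w, by ext i j; fin_cases i <;> fin_cases j <;> simp [mul_left_comm]⟩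

theorem one_mem_EthetaSet (θ : ℝ) : (1 : Matrix (Fin 2) (Fin 2) ℂ) ∈ EthetaSet θ :=
  ⟨1, 1, 0, by ext i j; fin_cases i <;> fin_cases j <;> simp⟩

theorem quaternionMatrix_mem_EthetaSet {θ : ℝ} (a : ℂ) {w : ℂ}
    (hw : Complex.exp (θ * Complex.I) * w = -conj w) : quaternionMatrix a w ∈ EthetaSet θ :=
  ⟨a, conj a, w, by rw [hw]; rfl⟩

noncomputable def skewAxis (θ : ℝ) : ℂ := Complex.I * Complex.exp (-(θ / 2 : ℝ) * Complex.I)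

theorem normSq_skewAxis (θ : ℝ) : Complex.normSq (skewAxis θ) = 1 := by
  rw [skewAxis, Complex.normSq_mul, Complex.normSq_I, ← Complex.sq_norm, Complex.norm_exp]
  simp

theorem exp_mul_ofReal_mul_skewAxis (θ t : ℝ) :
    Complex.exp (θ * Complex.I) * (t * skewAxis θ) = -conj ((t : ℂ) * skewAxis θ) := by
  rw [skewAxis, map_mul, map_mul, Complex.conj_ofReal, Complex.conj_I, ← Complex.exp_conj,
    map_mul, Complex.conj_I, map_neg, Complex.conj_ofReal]
  have hexp : Complex.exp (θ * Complex.I) * Complex.exp (-((θ / 2 : ℝ) : ℂ) * Complex.I)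
      = Complex.exp (-((θ / 2 : ℝ) : ℂ) * -Complex.I) := by
    rw [← Complex.exp_add]; push_cast; ring_nf
  linear_combination (t : ℂ) * Complex.I * hexp

theorem exists_unitary_mem_EthetaSet_apply_eq (θ : ℝ) {u v : EuclideanSpace ℂ (Fin 2)}
    (huv : ‖u‖ = ‖v‖) : ∃ U ∈ EthetaSet θ, U ∈ unitaryGroup (Fin 2) ℂ ∧ 𝒯 U u = v := by
  rcases eq_or_ne v 0 with rfl | hv
  · rw [norm_zero, norm_eq_zero] at huv
    exact ⟨1, one_mem_EthetaSet θ, one_mem _, by simp [huv]⟩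
  -- The matrices `quaternionMatrix a (t * η)` form a real 3-space of multiples of
  -- unitaries in `E_θ`, and `Y u ∥ v` is only two real linear conditions on `(a, t)`.
  set η := skewAxis θ
  obtain ⟨⟨a, t⟩, hat, hcross⟩ := exists_ne_zero_mul_sub_conj_mul_add_mul_eq_zero
    (u 0 * v 1) (u 1 * v 0) (η * (u 1 * v 1) + conj η * (u 0 * v 0))
  set Y := quaternionMatrix a (t * η)
  set r := Complex.normSq a + t ^ 2
  have hYY : Yᴴ * Y = (r : ℂ) • 1 := by
    rw [conjTranspose_quaternionMatrix_mul_self, Complex.normSq_mul, Complex.normSq_ofReal,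
      normSq_skewAxis, mul_one, ← sq]
  obtain ⟨c, hc⟩ := EuclideanSpace.exists_eq_smul_of_mul_sub_mul_eq_zero (p := 𝒯 Y u) hv (by
    simp only [Y, toEuclideanCLM_quaternionMatrix_apply, map_mul, Complex.conj_ofReal, neg_mul,
      cons_val_zero, cons_val_one, cons_val_fin_one]
    linear_combination hcross)
  have hr : r = ‖c‖ ^ 2 := by
    have h := norm_toEuclideanCLM_apply_sq hYY u
    rw [hc, norm_smul, huv, mul_pow] at h
    exact (mul_right_cancel₀ (pow_ne_zero 2 (norm_ne_zero_iff.2 hv)) h).symm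
  have hc0 : c ≠ 0 := by
    rintro rfl
    rw [norm_zero, zero_pow two_ne_zero] at hr
    have ht : t = 0 := by nlinarith [Complex.normSq_nonneg a]
    have ha : Complex.normSq a = 0 := by nlinarith [Complex.normSq_nonneg a]
    exact hat (Prod.ext (Complex.normSq_eq_zero.1 ha) ht)
  refine ⟨c⁻¹ • Y, smul_mem_EthetaSet _ (quaternionMatrix_mem_EthetaSet a
    (exp_mul_ofReal_mul_skewAxis θ t)), ?_, ?_⟩
  · rw [mem_unitaryGroup_iff', star_smul, smul_mul_smul_comm, star_eq_conjTranspose, hYY, smul_smul]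
    rw [star_inv₀, ← mul_inv, Complex.star_def, Complex.conj_mul', hr, Complex.ofReal_pow,
      inv_mul_cancel₀ (by simpa using hc0), one_smul]
  · rw [map_smul, _root_.smul_apply, hc, smul_smul, inv_mul_cancel₀ hc0, one_smul]

theorem mu_EthetaSet_eq_opNorm (θ : ℝ) (A : Matrix (Fin 2) (Fin 2) ℂ) :
    mu (EthetaSet θ) A = opNorm A :=
  mu_eq_opNorm_of_exists_unitary (fun c _ hX => smul_mem_EthetaSet c hX)
    (fun _ _ huv => exists_unitary_mem_EthetaSet_apply_eq θ huv) A

/-- Corollary 4.2: for every θ ∈ ℝ, 𝔽 = 𝔽_{μ_{E_θ}}. -/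
theorem stmt18 (θ : ℝ) : domF = Fmu (EthetaSet θ) := by
  simp only [domF, Fmu, mu_EthetaSet_eq_opNorm]
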